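/- Let G = (V,E) be a finite simple graph, let E' ⊆ E, and let {u,w} ∈ E'. Let C = { z ∈ V : z is an endpoint of some edge {x,y} ∈ E' such that {u,w} ∪ {x,y} is a clique in G }. If C is a clique in G, then there exists a set of cliques of G of minimum cardinality θ_E(G,E') covering every edge of E' that contains C as a member. -/

import Mathlib

/-! Take a minimum clique cover of `E'` and a clique `D` of it covering `{u,w}`. Every edge of `E'`
covered by `D` lies, together with `{u,w}`, inside the clique `D`, so its endpoints belong to `C`.
Replacing `D` by the clique `C` therefore gives a cover of `E'` with no more cliques, which is again
of minimum cardinality. -/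

open SimpleGraph

/-- The (partial) transformed graph `G'_VCC` of a graph `G` with respect to a set `E'` of
edges of `G`: one vertex per edge of `E'`, two distinct vertices adjacent iff the union of
the endpoints of their corresponding edges is a clique in `G`. -/
def SimpleGraph.transGraph {V : Type*} (G : SimpleGraph V) (E' : Set (Sym2 V)) :
    SimpleGraph {e : Sym2 V // e ∈ E'} where
  Adj a b := a ≠ b ∧ G.IsClique ({x | x ∈ a.1} ∪ {x | x ∈ b.1})
  symm := by
    refine ⟨fun a b h => ?_⟩
    exact ⟨h.1.symm, by rw [Set.union_comm]; exact h.2⟩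
  loopless := by
    refine ⟨fun a h => ?_⟩
    exact h.1 rfl

/-- The minimum cardinality of a vertex clique cover of `G`. -/
noncomputable def SimpleGraph.vccNumber {W : Type*} (G : SimpleGraph W) : ℕ :=
  sInf {n | ∃ 𝒞 : Set (Set W), 𝒞.Finite ∧ 𝒞.ncard = n ∧
    (∀ C ∈ 𝒞, G.IsClique C) ∧ ∀ w : W, ∃ C ∈ 𝒞, w ∈ C}

/-- The minimum cardinality of a set of cliques of `G` covering every edge of `E'`. -/
noncomputable def SimpleGraph.eccNumberOn {W : Type*} (G : SimpleGraph W)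
    (E' : Set (Sym2 W)) : ℕ :=
  sInf {n | ∃ 𝒞 : Set (Set W), 𝒞.Finite ∧ 𝒞.ncard = n ∧
    (∀ C ∈ 𝒞, G.IsClique C) ∧ ∀ e ∈ E', ∃ C ∈ 𝒞, ∀ x ∈ e, x ∈ C}

/-- The minimum cardinality of an edge clique cover of `G`. -/
noncomputable def SimpleGraph.eccNumber {W : Type*} (G : SimpleGraph W) : ℕ :=
  G.eccNumberOn G.edgeSet

/-- `G` is `d`-degenerate: every nonempty (induced) subgraph has a vertex of degree at most
`d`. -/
def SimpleGraph.Degenerate {W : Type*} (G : SimpleGraph W) (d : ℕ) : Prop :=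
  ∀ S : Set W, S.Nonempty → ∃ v ∈ S, {u ∈ S | G.Adj v u}.ncard ≤ d

/-- The degeneracy of `G`: the smallest `d` such that `G` is `d`-degenerate. -/
noncomputable def SimpleGraph.degeneracy {W : Type*} (G : SimpleGraph W) : ℕ :=
  sInf {d | G.Degenerate d}

theorem Set.ncard_insert_sdiff_singleton_le {α : Type*} {s : Set α} {b : α} (a : α) (hb : b ∈ s)
    (hs : s.Finite) : (insert a (s \ {b})).ncard ≤ s.ncard :=
  (Set.ncard_insert_le a _).trans (Set.ncard_sdiff_singleton_add_one hb hs).le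

namespace SimpleGraph

variable {W : Type*} {G : SimpleGraph W} {E' : Set (Sym2 W)}

def IsCliqueCoverOn (G : SimpleGraph W) (E' : Set (Sym2 W)) (𝒞 : Set (Set W)) : Prop :=
  (∀ D ∈ 𝒞, G.IsClique D) ∧ ∀ e ∈ E', ∃ D ∈ 𝒞, ∀ x ∈ e, x ∈ D

def cliqueCompatibleVerts (G : SimpleGraph W) (E' : Set (Sym2 W)) (f : Sym2 W) : Set W :=
  {z | ∃ e ∈ E', z ∈ e ∧ G.IsClique ({x | x ∈ f} ∪ {x | x ∈ e})}

theorem isClique_setOf_mem_of_mem_edgeSet {e : Sym2 W} (he : e ∈ G.edgeSet) :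
    G.IsClique {x | x ∈ e} := by
  induction e with
  | _ a b =>
    have hpair : {x | x ∈ s(a, b)} = {a, b} := by ext; simp
    rw [hpair, isClique_pair]
    exact fun _ => he

theorem eccNumberOn_le_ncard {𝒞 : Set (Set W)} (hfin : 𝒞.Finite) (h𝒞 : G.IsCliqueCoverOn E' 𝒞) :
    G.eccNumberOn E' ≤ 𝒞.ncard :=
  Nat.sInf_le ⟨𝒞, hfin, rfl, h𝒞⟩

theorem exists_isCliqueCoverOn_ncard_eq_eccNumberOn [Finite W] (hE' : E' ⊆ G.edgeSet) :
    ∃ 𝒞 : Set (Set W), G.IsCliqueCoverOn E' 𝒞 ∧ 𝒞.ncard = G.eccNumberOn E' := by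
  have hcovers : {n | ∃ 𝒞 : Set (Set W), 𝒞.Finite ∧ 𝒞.ncard = n ∧
      G.IsCliqueCoverOn E' 𝒞}.Nonempty := by
    refine ⟨_, (fun e => {x | x ∈ e}) '' E', Set.toFinite _, rfl, ?_, ?_⟩
    · rintro D ⟨e, he, rfl⟩
      exact isClique_setOf_mem_of_mem_edgeSet (hE' he)
    · exact fun e he => ⟨_, Set.mem_image_of_mem _ he, fun _ => id⟩
  obtain ⟨𝒞, -, hcard, h𝒞⟩ := Nat.sInf_mem hcovers
  exact ⟨𝒞, h𝒞, hcard⟩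

theorem IsCliqueCoverOn.insert_sdiff_singleton {𝒞 : Set (Set W)} {C D : Set W}
    (h𝒞 : G.IsCliqueCoverOn E' 𝒞) (hC : G.IsClique C)
    (hDC : ∀ e ∈ E', (∀ x ∈ e, x ∈ D) → ∀ x ∈ e, x ∈ C) :
    G.IsCliqueCoverOn E' (insert C (𝒞 \ {D})) := by
  refine ⟨?_, fun e he => ?_⟩
  · rintro D' (rfl | ⟨hD', -⟩)
    exacts [hC, h𝒞.1 D' hD']
  · obtain ⟨D', hD', heD'⟩ := h𝒞.2 e he
    by_cases hD'D : D' = D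
    · exact ⟨C, Set.mem_insert _ _, hDC e he (hD'D ▸ heD')⟩
    · exact ⟨D', Set.mem_insert_of_mem _ ⟨hD', hD'D⟩, heD'⟩

theorem mem_cliqueCompatibleVerts_of_subset_isClique {D : Set W} {f e : Sym2 W} {z : W}
    (hD : G.IsClique D) (hfD : ∀ x ∈ f, x ∈ D) (he : e ∈ E') (heD : ∀ x ∈ e, x ∈ D)
    (hz : z ∈ e) :
    z ∈ G.cliqueCompatibleVerts E' f :=
  ⟨e, he, hz, hD.subset (Set.union_subset hfD heD)⟩

end SimpleGraph

/-- Let `{u,w} ∈ E'` and let `C` be the set of all endpoints of edges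
`{x,y} ∈ E'` such that `{u,w} ∪ {x,y}` is a clique in `G`. If `C` is a clique in
`G`, then there is a minimum-cardinality set of cliques of `G` covering every edge of
`E'` that contains `C` as a member. -/
theorem stmt_13 {V : Type*} [Fintype V] (G : SimpleGraph V) (E' : Set (Sym2 V))
    (hE' : E' ⊆ G.edgeSet) (u w : V) (he : s(u, w) ∈ E')
    (C : Set V)
    (hC : C = {z : V | ∃ e ∈ E', z ∈ e ∧
      G.IsClique ({x | x ∈ (s(u, w) : Sym2 V)} ∪ {x | x ∈ e})})
    (hclique : G.IsClique C) :
    ∃ 𝒞 : Set (Set V), 𝒞.Finite ∧ (∀ D ∈ 𝒞, G.IsClique D) ∧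
      (∀ e ∈ E', ∃ D ∈ 𝒞, ∀ x ∈ e, x ∈ D) ∧
      𝒞.ncard = G.eccNumberOn E' ∧ C ∈ 𝒞 := by
  change C = G.cliqueCompatibleVerts E' s(u, w) at hC
  obtain ⟨𝒞, h𝒞, hcard⟩ := exists_isCliqueCoverOn_ncard_eq_eccNumberOn hE'
  obtain ⟨D, hD, huwD⟩ := h𝒞.2 _ he
  have h𝒞' : G.IsCliqueCoverOn E' (insert C (𝒞 \ {D})) :=
    h𝒞.insert_sdiff_singleton hclique fun e he' heD _ hx =>
      hC ▸ mem_cliqueCompatibleVerts_of_subset_isClique (h𝒞.1 D hD) huwD he' heD hx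
  have hle : (insert C (𝒞 \ {D})).ncard ≤ G.eccNumberOn E' :=
    (Set.ncard_insert_sdiff_singleton_le C hD (Set.toFinite _)).trans hcard.le
  exact ⟨_, Set.toFinite _, h𝒞'.1, h𝒞'.2,
    hle.antisymm (eccNumberOn_le_ncard (Set.toFinite _) h𝒞'), Set.mem_insert _ _⟩
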